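/- (Theorem 1, case M > 2, quantitative form.) For every integer M ≥ 3, the canonical Collett phase variance of M copies of the equal superposition state satisfies V_C(M, N_K) := (1/(N_K + 1)^M) · Σ_{n=−1}^{M·N_K} (√(f_M(n+1)) − √(f_M(n)))² ≤ M! / (N_K + 1)². In particular, for fixed M > 2 this variance is O(1/N_K²), the Heisenberg-limited scaling. -/

import Mathlib

/-!
Peeling off one coordinate gives `f_M(n+1) - f_M(n) = f_{M-1}(n+1) - f_{M-1}(n - N_K)`.
Cauchy–Schwarz on `f_{K+1}(y) = ∑_{j ≤ N_K} f_K(y - j)` propagates `f_2^2 ≤ 2 f_3` (true because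
`f_2` is a tent of slope one and height at most `N_K + 1`) to `f_{M-1}(x)^2 ≤ 2 (N_K+1)^{M-3} f_M(x)`,
and the symmetry `n ↦ M N_K - n` turns this into `f_{M-1}(n - N_K)^2 ≤ 2 (N_K+1)^{M-3} f_M(n)`.
So each term `(√a - √b)^2 ≤ (a - b)^2 / (a + b)` is at most `2 (N_K+1)^{M-3}`; there are
`M N_K + 2 ≤ M (N_K + 1)` of them, and `2 M ≤ M!`.
-/

/-- The number of `M`-tuples `(n_1, …, n_M)` with each `n_i ∈ {0, …, NK}`
and `n_1 + ⋯ + n_M = n`. -/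
def f (NK M : ℕ) (n : ℤ) : ℕ :=
  (Finset.univ.filter
    (fun t : Fin M → Fin (NK + 1) => (∑ i, ((t i : ℕ) : ℤ)) = n)).card

open Finset

lemma f_succ (NK M : ℕ) (n : ℤ) :
    f NK (M + 1) n = ∑ j ∈ range (NK + 1), f NK M (n - j) := by
  simp only [f, card_filter]
  rw [← (Fin.consEquiv fun _ => Fin (NK + 1)).sum_comp, Fintype.sum_prod_type,
    ← Fin.sum_univ_eq_sum_range (fun j => ∑ s : Fin M → Fin (NK + 1), _)]
  simp only [Fin.consEquiv_apply, Fin.sum_univ_succ, Fin.cons_zero, Fin.cons_succ,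
    eq_sub_iff_add_eq']

lemma f_succ_add_one_add (NK K : ℕ) (n : ℤ) :
    f NK (K + 1) (n + 1) + f NK K (n - NK) = f NK (K + 1) n + f NK K (n + 1) := by
  rw [f_succ, f_succ, sum_range_succ', sum_range_succ]
  simp only [Nat.cast_add, Nat.cast_one, Nat.cast_zero, add_sub_add_right_eq_sub, sub_zero]
  ring

lemma sum_val_rev {NK M : ℕ} (t : Fin M → Fin (NK + 1)) :
    ∑ i, (((t i).rev : ℕ) : ℤ) = M * NK - ∑ i, ((t i : ℕ) : ℤ) := by
  have h : ∀ i, (((t i).rev : ℕ) : ℤ) = NK - (t i : ℕ) := fun i => by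
    rw [Fin.val_rev]; omega
  simp only [h, sum_sub_distrib, sum_const, card_univ, Fintype.card_fin, nsmul_eq_mul]

lemma f_symm (NK M : ℕ) (n : ℤ) : f NK M (M * NK - n) = f NK M n := by
  refine card_nbij' (fun t i => (t i).rev) (fun t i => (t i).rev) ?_ ?_ ?_ ?_ <;>
    intro t ht <;>
    simp only [mem_coe, mem_filter, mem_univ, true_and, sum_val_rev, Fin.rev_rev] at * <;>
    omega

lemma f_one_le (NK : ℕ) (n : ℤ) : f NK 1 n ≤ 1 :=
  card_le_one.2 fun s hs t ht => by
    simp only [mem_filter, Fin.sum_univ_one] at hs ht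
    exact funext fun i => Fin.ext (by rw [Subsingleton.elim i 0]; omega)

lemma f_two_le (NK : ℕ) (n : ℤ) : f NK 2 n ≤ NK + 1 := by
  rw [f_succ]
  exact (sum_le_card_nsmul (range (NK + 1)) _ 1 fun j _ => f_one_le NK (n - j)).trans_eq (by simp)

lemma f_two_le_f_two_sub_one_add_one (NK : ℕ) (y : ℤ) : f NK 2 y ≤ f NK 2 (y - 1) + 1 := by
  have h := f_succ_add_one_add NK 1 (y - 1)
  simp only [sub_add_cancel, Nat.reduceAdd] at h
  have := f_one_le NK y
  omega

lemma f_two_sub_le (NK : ℕ) (x : ℤ) (j : ℕ) : f NK 2 x - j ≤ f NK 2 (x - j) := by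
  induction j with
  | zero => simp
  | succ j ih =>
    have h := f_two_le_f_two_sub_one_add_one NK (x - j)
    rw [sub_sub, ← Nat.cast_add_one] at h
    omega

lemma sum_range_sub_mul_two (m : ℕ) : (∑ j ∈ range m, (m - j)) * 2 = m * (m + 1) := by
  induction m with
  | zero => simp
  | succ m ih =>
    rw [sum_range_succ', add_mul]
    simp only [Nat.add_sub_add_right, Nat.sub_zero, ih]
    ring

lemma f_two_sq_le (NK : ℕ) (x : ℤ) : f NK 2 x ^ 2 ≤ 2 * f NK 3 x := by
  set m := f NK 2 x
  calc m ^ 2 ≤ (∑ j ∈ range m, (m - j)) * 2 := by rw [sum_range_sub_mul_two]; nlinarith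
    _ ≤ (∑ j ∈ range m, f NK 2 (x - j)) * 2 := by gcongr with j; exact f_two_sub_le NK x j
    _ ≤ (∑ j ∈ range (NK + 1), f NK 2 (x - j)) * 2 := by
      gcongr; exact f_two_le NK x
    _ = 2 * f NK 3 x := by rw [f_succ, mul_comm]

lemma f_sq_le_of_sq_le {NK K C : ℕ} (h : ∀ y, f NK K y ^ 2 ≤ C * f NK (K + 1) y) (y : ℤ) :
    f NK (K + 1) y ^ 2 ≤ (NK + 1) * C * f NK (K + 2) y := by
  calc f NK (K + 1) y ^ 2 ≤ (NK + 1) * ∑ j ∈ range (NK + 1), f NK K (y - j) ^ 2 := by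
        rw [f_succ]
        exact sq_sum_le_card_mul_sum_sq.trans_eq (by simp)
    _ ≤ (NK + 1) * ∑ j ∈ range (NK + 1), C * f NK (K + 1) (y - j) := by gcongr; exact h _
    _ = (NK + 1) * C * f NK (K + 2) y := by rw [← mul_sum, f_succ, mul_assoc]

lemma f_sq_le (NK k : ℕ) (y : ℤ) : f NK (k + 2) y ^ 2 ≤ 2 * (NK + 1) ^ k * f NK (k + 3) y := by
  induction k generalizing y with
  | zero => simpa using f_two_sq_le NK y
  | succ k ih =>
    calc f NK (k + 3) y ^ 2 ≤ (NK + 1) * (2 * (NK + 1) ^ k) * f NK (k + 4) y :=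
          f_sq_le_of_sq_le ih y
      _ = 2 * (NK + 1) ^ (k + 1) * f NK (k + 4) y := by ring

lemma sq_sqrt_sub_sqrt_le {a b c : ℝ} (ha : 0 ≤ a) (hb : 0 ≤ b) (hc : 0 ≤ c)
    (h : (a - b) ^ 2 ≤ c * (a + b)) : (√a - √b) ^ 2 ≤ c := by
  have hsa := Real.sq_sqrt ha
  have hsb := Real.sq_sqrt hb
  rcases (add_nonneg (Real.sqrt_nonneg a) (Real.sqrt_nonneg b)).eq_or_lt with h0 | hpos
  · nlinarith [Real.sqrt_nonneg a, Real.sqrt_nonneg b]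
  · refine le_of_mul_le_mul_right ?_ (pow_pos hpos 2)
    calc (√a - √b) ^ 2 * (√a + √b) ^ 2 = (√a ^ 2 - √b ^ 2) ^ 2 := by ring
      _ = (a - b) ^ 2 := by rw [hsa, hsb]
      _ ≤ c * (a + b) := h
      _ ≤ c * (√a + √b) ^ 2 := by
        gcongr; nlinarith [mul_nonneg (Real.sqrt_nonneg a) (Real.sqrt_nonneg b)]

lemma sq_sqrt_f_add_one_sub_sqrt_f_le (NK k : ℕ) (n : ℤ) :
    (√(f NK (k + 3) (n + 1)) - √(f NK (k + 3) n)) ^ 2 ≤ 2 * ((NK : ℝ) + 1) ^ k := by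
  refine sq_sqrt_sub_sqrt_le (by positivity) (by positivity) (by positivity) ?_
  have hdiff : (f NK (k + 3) (n + 1) : ℝ) + f NK (k + 2) (n - NK)
      = f NK (k + 3) n + f NK (k + 2) (n + 1) := by
    exact_mod_cast f_succ_add_one_add NK (k + 2) n
  have hmirror := f_sq_le NK k ((k + 2 : ℕ) * NK - (n - NK))
  rw [f_symm, show ((k + 2 : ℕ) : ℤ) * NK - (n - NK) = (k + 3 : ℕ) * NK - n by push_cast; ring,
    f_symm] at hmirror
  have hA : (f NK (k + 2) (n + 1) : ℝ) ^ 2 ≤ 2 * ((NK : ℝ) + 1) ^ k * f NK (k + 3) (n + 1) := by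
    exact_mod_cast f_sq_le NK k (n + 1)
  have hB : (f NK (k + 2) (n - NK) : ℝ) ^ 2 ≤ 2 * ((NK : ℝ) + 1) ^ k * f NK (k + 3) n := by
    exact_mod_cast hmirror
  have hdiff_sub : (f NK (k + 3) (n + 1) : ℝ) - f NK (k + 3) n
      = f NK (k + 2) (n + 1) - f NK (k + 2) (n - NK) := by
    linarith
  rw [hdiff_sub]
  nlinarith [mul_nonneg (Nat.cast_nonneg (α := ℝ) (f NK (k + 2) (n + 1)))
    (Nat.cast_nonneg (α := ℝ) (f NK (k + 2) (n - NK)))]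

lemma two_mul_add_two_le_factorial_mul (NK k : ℕ) :
    2 * ((k + 3) * NK + 2) ≤ (k + 3).factorial * (NK + 1) := by
  have h : 2 ≤ (k + 2).factorial := le_trans (by omega) (Nat.self_le_factorial (k + 2))
  calc 2 * ((k + 3) * NK + 2) ≤ (k + 3) * 2 * (NK + 1) := by nlinarith
    _ ≤ (k + 3) * (k + 2).factorial * (NK + 1) := by gcongr
    _ = (k + 3).factorial * (NK + 1) := by rw [← Nat.factorial_succ]

theorem stmt9_general (NK : ℕ) (M : ℕ) (hM : 3 ≤ M) :
    (1 / ((NK : ℝ) + 1) ^ M) *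
      (∑ i ∈ Finset.range (M * NK + 2),
        (Real.sqrt (f NK M ((i : ℤ) - 1 + 1)) - Real.sqrt (f NK M ((i : ℤ) - 1))) ^ 2)
    ≤ (Nat.factorial M : ℝ) / ((NK : ℝ) + 1) ^ 2 := by
  obtain ⟨k, rfl⟩ : ∃ k, M = k + 3 := ⟨M - 3, by omega⟩
  have hcount : (2 * (((k + 3) * NK + 2 : ℕ) : ℝ)) ≤ (k + 3).factorial * ((NK : ℝ) + 1) := by
    exact_mod_cast two_mul_add_two_le_factorial_mul NK k
  calc _ ≤ 1 / ((NK : ℝ) + 1) ^ (k + 3) *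
        (((k + 3) * NK + 2 : ℕ) • (2 * ((NK : ℝ) + 1) ^ k)) := by
        gcongr
        exact (sum_le_card_nsmul _ _ _ fun i _ => sq_sqrt_f_add_one_sub_sqrt_f_le NK k _).trans_eq
          (by rw [card_range])
    _ = 2 * (((k + 3) * NK + 2 : ℕ) : ℝ) / ((NK : ℝ) + 1) ^ 2 / ((NK : ℝ) + 1) := by
        rw [nsmul_eq_mul]; field_simp; ring
    _ ≤ (k + 3).factorial * ((NK : ℝ) + 1) / ((NK : ℝ) + 1) ^ 2 / ((NK : ℝ) + 1) := by gcongr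
    _ = _ := by field_simp

/-- Theorem 1, case `M > 2`, quantitative form: the canonical Collett phase variance
`V_C = (1/(N_K+1)^M) Σ_{n=−1}^{M·N_K} (√(f_M(n+1)) − √(f_M(n)))²` of `M ≥ 3` copies of
the equal superposition state is at most `M! / (N_K + 1)²` (Heisenberg-limited scaling). -/
theorem stmt9 (NK : ℕ) (hNK : 0 < NK) (M : ℕ) (hM : 3 ≤ M) :
    (1 / ((NK : ℝ) + 1) ^ M) *
      (∑ i ∈ Finset.range (M * NK + 2),
        (Real.sqrt (f NK M ((i : ℤ) - 1 + 1)) - Real.sqrt (f NK M ((i : ℤ) - 1))) ^ 2)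
    ≤ (Nat.factorial M : ℝ) / ((NK : ℝ) + 1) ^ 2 :=
  stmt9_general NK M hM
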